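/- arXiv:2209.14978 — 2 statements merged into one kernel-verified Lean document; each statement's English description precedes it below -/
import Mathlib

section
/- Let s and r be positive integers and set k = s(r+1). Then for every integer m with 1 ≤ m ≤ r+1, the sum of all entries of A_{k,s}^m satisfies ∑_{a=0}^{k−1} ∑_{b=0}^{k−1} (A_{k,s}^m)_{a,b} = (s+1)^{m−1} · ( (m+1)·s·(k−s−1) + k + s(s+1) ). -/
/-- The transfer matrix `A_{k,s}`: the `(a,b)` entry is `0` if `a ≥ s`, `b ≤ k−s−1` and
`a ≠ b+s`, and `1` otherwise. -/
def transferMatrix (k s : ℕ) : Matrix (Fin k) (Fin k) ℚ :=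
  Matrix.of fun a b =>
    if s ≤ (a : ℕ) ∧ (b : ℕ) ≤ k - s - 1 ∧ (a : ℕ) ≠ (b : ℕ) + s then 0 else 1

/-- Block values of `A^m · 𝟙`. -/
def cseq (s r : ℕ) : ℕ → ℕ → ℚ
  | 0, _ => 1
  | m+1, 0 => s * ∑ j ∈ Finset.range (r+1), cseq s r m j
  | m+1, j+1 => cseq s r m j + s * cseq s r m r

lemma blocksum (s : ℕ) (hs : 0 < s) (f : ℕ → ℚ) (n : ℕ) :
    ∑ b ∈ Finset.range (s*n), f (b/s) = s * ∑ j ∈ Finset.range n, f j := by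
  induction n with
  | zero => simp
  | succ n ih =>
    have h : s*(n+1) = s*n + s := by ring
    rw [h, Finset.sum_range_add, ih, Finset.sum_range_succ, mul_add]
    congr 1
    have : ∀ i ∈ Finset.range s, f ((s*n + i)/s) = f n := by
      intro i hi
      simp only [Finset.mem_range] at hi
      congr 1
      rw [Nat.mul_comm s n, Nat.add_comm, Nat.add_mul_div_right _ _ hs,
        Nat.div_eq_of_lt hi, Nat.zero_add]
    rw [Finset.sum_congr rfl this, Finset.sum_const, Finset.card_range,
      nsmul_eq_mul]

lemma step (s r : ℕ) (hs : 0 < s) (hr : 0 < r) (m : ℕ) (a : Fin (s*(r+1))) :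
    ∑ b : Fin (s*(r+1)), transferMatrix (s*(r+1)) s a b * cseq s r m ((b:ℕ)/s)
      = cseq s r (m+1) ((a:ℕ)/s) := by
  have hk : s*(r+1) = s*r + s := by ring
  have hsr : 1 ≤ s*r := Nat.one_le_iff_ne_zero.2 (by positivity)
  have hconv : ∑ b : Fin (s*(r+1)), transferMatrix (s*(r+1)) s a b * cseq s r m ((b:ℕ)/s)
      = ∑ i ∈ Finset.range (s*(r+1)),
          (if s ≤ (a : ℕ) ∧ i ≤ s*(r+1) - s - 1 ∧ (a : ℕ) ≠ i + s then 0 else 1)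
            * cseq s r m (i/s) :=
    Fin.sum_univ_eq_sum_range
      (fun i => (if s ≤ (a : ℕ) ∧ i ≤ s*(r+1) - s - 1 ∧ (a : ℕ) ≠ i + s then 0 else 1)
        * cseq s r m (i/s)) _
  rw [hconv]
  by_cases ha : s ≤ (a : ℕ)
  · -- row with a ≥ s
    have hent : ∀ i, ((if s ≤ (a : ℕ) ∧ i ≤ s*(r+1) - s - 1 ∧ (a : ℕ) ≠ i + s then (0:ℚ) else 1)
        * cseq s r m (i/s))
        = if i < s*r ∧ i ≠ (a:ℕ) - s then 0 else cseq s r m (i/s) := by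
      intro i
      have hiff : (s ≤ (a : ℕ) ∧ i ≤ s*(r+1) - s - 1 ∧ (a : ℕ) ≠ i + s)
          ↔ (i < s*r ∧ i ≠ (a:ℕ) - s) := by
        constructor
        · rintro ⟨_, h1, h2⟩; omega
        · rintro ⟨h1, h2⟩; refine ⟨ha, by omega, by omega⟩
      rw [if_congr hiff rfl rfl]
      split_ifs <;> simp
    have hrange : Finset.range (s*(r+1)) = Finset.range (s*r+s) := by rw [hk]
    rw [Finset.sum_congr rfl (fun i _ => hent i), hrange, Finset.sum_range_add]
    have h1 : ∑ i ∈ Finset.range (s*r), (if i < s*r ∧ i ≠ (a:ℕ) - s then (0:ℚ) else cseq s r m (i/s))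
        = cseq s r m (((a:ℕ) - s)/s) := by
      have : ∀ i ∈ Finset.range (s*r),
          (if i < s*r ∧ i ≠ (a:ℕ) - s then (0:ℚ) else cseq s r m (i/s))
          = if i = (a:ℕ) - s then cseq s r m (i/s) else 0 := by
        intro i hi
        simp only [Finset.mem_range] at hi
        by_cases h : i = (a:ℕ) - s <;> simp [h, hi]
      rw [Finset.sum_congr rfl this, Finset.sum_ite_eq']
      have hmem : (a:ℕ) - s ∈ Finset.range (s*r) := by
        simp only [Finset.mem_range]
        have := a.2; omega
      rw [if_pos hmem]
    have h2 : ∑ i ∈ Finset.range s,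
        (if s*r + i < s*r ∧ s*r + i ≠ (a:ℕ) - s then (0:ℚ) else cseq s r m ((s*r + i)/s))
        = s * cseq s r m r := by
      have : ∀ i ∈ Finset.range s,
          (if s*r + i < s*r ∧ s*r + i ≠ (a:ℕ) - s then (0:ℚ) else cseq s r m ((s*r + i)/s))
          = cseq s r m r := by
        intro i hi
        simp only [Finset.mem_range] at hi
        rw [if_neg (by omega)]
        congr 1
        rw [Nat.mul_comm s r, Nat.add_comm, Nat.add_mul_div_right _ _ hs,
          Nat.div_eq_of_lt hi, Nat.zero_add]
      rw [Finset.sum_congr rfl this, Finset.sum_const, Finset.card_range, nsmul_eq_mul]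
    rw [h1, h2]
    have hdiva : (a:ℕ)/s = ((a:ℕ) - s)/s + 1 := by
      conv_lhs => rw [show (a:ℕ) = ((a:ℕ) - s) + s by omega]
      rw [Nat.add_div_right _ hs]
    rw [hdiva]
    rfl
  · -- row with a < s
    have hent : ∀ i, ((if s ≤ (a : ℕ) ∧ i ≤ s*(r+1) - s - 1 ∧ (a : ℕ) ≠ i + s then (0:ℚ) else 1)
        * cseq s r m (i/s)) = cseq s r m (i/s) := by
      intro i
      rw [if_neg (by tauto), one_mul]
    rw [Finset.sum_congr rfl (fun i _ => hent i), blocksum s hs _ (r+1),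
      Nat.div_eq_of_lt (by omega)]
    rfl

lemma rowsum (s r : ℕ) (hs : 0 < s) (hr : 0 < r) (m : ℕ) (a : Fin (s*(r+1))) :
    ∑ b : Fin (s*(r+1)), (transferMatrix (s*(r+1)) s ^ m) a b = cseq s r m ((a:ℕ)/s) := by
  induction m generalizing a with
  | zero => simp [Matrix.one_apply, cseq]
  | succ m ih =>
    rw [pow_succ']
    have : ∀ b, (transferMatrix (s*(r+1)) s * transferMatrix (s*(r+1)) s ^ m) a b
        = ∑ x : Fin (s*(r+1)), transferMatrix (s*(r+1)) s a x
            * (transferMatrix (s*(r+1)) s ^ m) x b := fun b => Matrix.mul_apply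
    rw [Finset.sum_congr rfl (fun b _ => this b), Finset.sum_comm]
    have : ∀ x : Fin (s*(r+1)),
        ∑ b : Fin (s*(r+1)), transferMatrix (s*(r+1)) s a x
          * (transferMatrix (s*(r+1)) s ^ m) x b
        = transferMatrix (s*(r+1)) s a x * cseq s r m ((x:ℕ)/s) := by
      intro x
      rw [← Finset.mul_sum, ih x]
    rw [Finset.sum_congr rfl (fun x _ => this x), step s r hs hr m a]

lemma cseq_high (s r : ℕ) : ∀ m j, m ≤ j → j ≤ r → cseq s r m j = ((s:ℚ)+1)^m := by
  intro m
  induction m with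
  | zero => intro j _ _; simp [cseq]
  | succ m ih =>
    intro j hmj hjr
    obtain ⟨j', rfl⟩ : ∃ j', j = j'+1 := ⟨j - 1, by omega⟩
    rw [show cseq s r (m+1) (j'+1) = cseq s r m j' + s * cseq s r m r from rfl,
      ih j' (by omega) (by omega), ih r (by omega) le_rfl]
    ring

lemma Ssum_rec (s r : ℕ) (m : ℕ) (hm : m ≤ r) :
    ∑ j ∈ Finset.range (r+1), cseq s r (m+1) j
      = ((s:ℚ)+1) * (∑ j ∈ Finset.range (r+1), cseq s r m j)
        + ((s:ℚ)*r - 1) * ((s:ℚ)+1)^m := by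
  rw [Finset.sum_range_succ']
  have h1 : ∀ j ∈ Finset.range r, cseq s r (m+1) (j+1) = cseq s r m j + s * cseq s r m r :=
    fun j _ => rfl
  rw [Finset.sum_congr rfl h1, Finset.sum_add_distrib, Finset.sum_const, Finset.card_range,
    show cseq s r (m+1) 0 = s * ∑ j ∈ Finset.range (r+1), cseq s r m j from rfl,
    cseq_high s r m r hm le_rfl]
  have h2 : ∑ j ∈ Finset.range r, cseq s r m j
      = (∑ j ∈ Finset.range (r+1), cseq s r m j) - ((s:ℚ)+1)^m := by
    rw [Finset.sum_range_succ, cseq_high s r m r hm le_rfl]; ring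
  rw [h2, nsmul_eq_mul]
  ring

lemma Ssum_closed (s r : ℕ) (hs : 0 < s) (hr : 0 < r) :
    ∀ n, n ≤ r → ∑ j ∈ Finset.range (r+1), cseq s r (n+1) j
      = ((s:ℚ)+1)^n * (((n:ℚ)+2) * ((s:ℚ)*r - 1) + r + s + 2) := by
  intro n
  induction n with
  | zero =>
    intro _
    rw [Ssum_rec s r 0 (by omega)]
    have : ∑ j ∈ Finset.range (r+1), cseq s r 0 j = ((r:ℚ)+1) := by
      simp [cseq]
    rw [this]; push_cast; ring
  | succ n ih =>
    intro hn
    rw [Ssum_rec s r (n+1) hn, ih (by omega)]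
    push_cast; ring

/-- for `k = s(r+1)` and `1 ≤ m ≤ r+1`, the sum of all entries of
`A_{k,s}^m` equals `(s+1)^{m−1}·((m+1)·s·(k−s−1) + k + s(s+1))`. -/
theorem sum_entries_transferMatrix_pow (s r : ℕ) (hs : 0 < s) (hr : 0 < r)
    (m : ℕ) (hm : 1 ≤ m) (hm' : m ≤ r + 1) :
    ∑ a : Fin (s * (r + 1)), ∑ b : Fin (s * (r + 1)),
        (transferMatrix (s * (r + 1)) s ^ m) a b =
      ((s : ℚ) + 1) ^ (m - 1) *
        (((m : ℚ) + 1) * s * ((s : ℚ) * ((r : ℚ) + 1) - s - 1)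
          + (s : ℚ) * ((r : ℚ) + 1) + s * ((s : ℚ) + 1)) := by
  obtain ⟨n, rfl⟩ : ∃ n, m = n + 1 := ⟨m - 1, by omega⟩
  have h1 : ∀ a : Fin (s*(r+1)), ∑ b : Fin (s*(r+1)),
      (transferMatrix (s*(r+1)) s ^ (n+1)) a b = cseq s r (n+1) ((a:ℕ)/s) :=
    fun a => rowsum s r hs hr (n+1) a
  rw [Finset.sum_congr rfl (fun a _ => h1 a)]
  have h2 : ∑ a : Fin (s*(r+1)), cseq s r (n+1) ((a:ℕ)/s)
      = ∑ i ∈ Finset.range (s*(r+1)), cseq s r (n+1) (i/s) :=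
    Fin.sum_univ_eq_sum_range (fun i => cseq s r (n+1) (i/s)) _
  rw [h2, blocksum s hs _ (r+1), Ssum_closed s r hs hr n (by omega)]
  push_cast
  ring
end

section
/- Let s and r be positive integers and set k = s(r+1). Then the sum of all entries of A_{k,s}^{r+2} satisfies ∑_{a=0}^{k−1} ∑_{b=0}^{k−1} (A_{k,s}^{r+2})_{a,b} = (s+1)^{r+1} · ( (r+3)·s·(sr−1) + s(r+1) + s(s+1) ) + s(rs−1)². -/
def cfun (s r : ℕ) : ℕ → ℕ → ℚ
  | 0, _ => 1
  | (m+1), 0 => s * ∑ j ∈ Finset.range (r+1), cfun s r m j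
  | (m+1), (j+1) => cfun s r m j + s * cfun s r m r

lemma sum_div_blocks (g : ℕ → ℚ) (s : ℕ) (hs : 0 < s) (n : ℕ) :
    ∑ b ∈ Finset.range (s * n), g (b / s) = s * ∑ j ∈ Finset.range n, g j := by
  induction n with
  | zero => simp
  | succ n ih =>
    rw [Nat.mul_succ, Finset.sum_range_add, ih, Finset.sum_range_succ]
    have : ∀ x ∈ Finset.range s, g ((s * n + x) / s) = g n := by
      intro x hx
      rw [Nat.mul_add_div hs, Nat.div_eq_of_lt (Finset.mem_range.mp hx), add_zero]
    rw [Finset.sum_congr rfl this, Finset.sum_const, Finset.card_range, nsmul_eq_mul]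
    ring

lemma mulVec_pow (s r : ℕ) (hs : 0 < s) (hr : 0 < r) (m : ℕ) :
    (transferMatrix (s * (r + 1)) s ^ m).mulVec 1 =
      fun a : Fin (s * (r + 1)) => cfun s r m ((a : ℕ) / s) := by
  induction m with
  | zero =>
    rw [pow_zero, Matrix.one_mulVec]
    funext a; simp [cfun]
  | succ m ih =>
    have hsub : s * (r + 1) - s = s * r := by rw [Nat.mul_succ]; omega
    funext a
    rw [pow_succ', ← Matrix.mulVec_mulVec, ih]
    show ∑ b : Fin (s * (r + 1)),
        transferMatrix (s * (r + 1)) s a b * cfun s r m ((b : ℕ) / s) = _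
    by_cases ha : (a : ℕ) < s
    · -- first block: all entries are 1
      have h0 : (a : ℕ) / s = 0 := Nat.div_eq_of_lt ha
      have hone : ∀ b : Fin (s * (r + 1)), transferMatrix (s * (r + 1)) s a b = 1 := by
        intro b
        simp only [transferMatrix, Matrix.of_apply, ite_eq_right_iff]
        intro h; exact absurd h.1 (not_le.mpr ha)
      simp only [hone, one_mul]
      rw [Fin.sum_univ_eq_sum_range (fun b => cfun s r m (b / s)),
        sum_div_blocks _ s hs, h0]
      rfl
    · push_neg at ha
      set E : ℕ → ℚ := fun n =>
        if n < s * r then (if n = (a : ℕ) - s then 1 else 0) else 1 with hE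
      have hent : ∀ b : Fin (s * (r + 1)),
          transferMatrix (s * (r + 1)) s a b = E (b : ℕ) := by
        intro b
        simp only [hE, transferMatrix, Matrix.of_apply]
        by_cases hb : (b : ℕ) < s * r
        · by_cases he : (b : ℕ) = (a : ℕ) - s
          · have hax : (a : ℕ) = (b : ℕ) + s := by omega
            have hP : ¬ (s ≤ (a : ℕ) ∧ (b : ℕ) ≤ s * (r + 1) - s - 1 ∧
                (a : ℕ) ≠ (b : ℕ) + s) := fun h => h.2.2 hax
            rw [if_neg hP, if_pos hb, if_pos he]
          · have hble : (b : ℕ) ≤ s * (r + 1) - s - 1 := by omega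
            have hne : (a : ℕ) ≠ (b : ℕ) + s := by omega
            rw [if_pos ⟨ha, hble, hne⟩, if_pos hb, if_neg he]
        · have hx : ¬ ((b : ℕ) ≤ s * (r + 1) - s - 1) := by omega
          have hP : ¬ (s ≤ (a : ℕ) ∧ (b : ℕ) ≤ s * (r + 1) - s - 1 ∧
              (a : ℕ) ≠ (b : ℕ) + s) := fun h => hx h.2.1
          rw [if_neg hP, if_neg hb]
      simp only [hent]
      rw [Fin.sum_univ_eq_sum_range (fun n => E n * cfun s r m (n / s))]
      have hk : Finset.range (s * (r + 1)) = Finset.range (s * r + s) := by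
        rw [Nat.mul_succ]
      rw [hk, Finset.sum_range_add]
      have hfirst : ∑ n ∈ Finset.range (s * r), E n * cfun s r m (n / s)
          = cfun s r m (((a : ℕ) - s) / s) := by
        have : ∀ n ∈ Finset.range (s * r), E n * cfun s r m (n / s)
            = if n = (a : ℕ) - s then cfun s r m (n / s) else 0 := by
          intro n hn
          simp only [hE, if_pos (Finset.mem_range.mp hn)]
          split <;> simp
        rw [Finset.sum_congr rfl this]
        have hmem : (a : ℕ) - s ∈ Finset.range (s * r) := by
          have := a.isLt; rw [Finset.mem_range]; omega
        rw [Finset.sum_ite_eq' _ _ (fun n => cfun s r m (n / s)), if_pos hmem]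
      have hsecond : ∑ x ∈ Finset.range s, E (s * r + x) * cfun s r m ((s * r + x) / s)
          = s * cfun s r m r := by
        have : ∀ x ∈ Finset.range s, E (s * r + x) * cfun s r m ((s * r + x) / s)
            = cfun s r m r := by
          intro x hx
          have hx' := Finset.mem_range.mp hx
          have h1 : ¬ (s * r + x < s * r) := by omega
          rw [hE]
          simp only [if_neg h1, one_mul, Nat.mul_add_div hs, Nat.div_eq_of_lt hx', add_zero]
        rw [Finset.sum_congr rfl this, Finset.sum_const, Finset.card_range, nsmul_eq_mul]
      rw [hfirst, hsecond]
      -- now identify with cfun (m+1) (a/s)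
      have hdiv : (a : ℕ) / s = ((a : ℕ) - s) / s + 1 := by
        conv_lhs => rw [show (a : ℕ) = ((a : ℕ) - s) + s by omega]
        rw [Nat.add_div_right _ hs]
      rw [hdiv]
      rfl

lemma cfun_zero (s r j : ℕ) : cfun s r 0 j = 1 := by cases j <;> rfl

lemma cfun_const (s r : ℕ) : ∀ m j, m ≤ j → j ≤ r → cfun s r m j = ((s : ℚ) + 1) ^ m := by
  intro m
  induction m with
  | zero => intro j _ _; rw [cfun_zero, pow_zero]
  | succ m ih =>
    intro j hmj hjr
    obtain ⟨j, rfl⟩ : ∃ j', j = j' + 1 := ⟨j - 1, by omega⟩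
    show cfun s r m j + s * cfun s r m r = _
    rw [ih j (by omega) (by omega), ih r (by omega) le_rfl, pow_succ]
    ring

lemma S_rec (s r m : ℕ) :
    ∑ j ∈ Finset.range (r + 1), cfun s r (m + 1) j =
      ((s : ℚ) + 1) * ∑ j ∈ Finset.range (r + 1), cfun s r m j +
        ((r : ℚ) * s - 1) * cfun s r m r := by
  rw [Finset.sum_range_succ' (cfun s r (m + 1))]
  have h1 : ∀ j ∈ Finset.range r, cfun s r (m + 1) (j + 1)
      = cfun s r m j + s * cfun s r m r := fun j _ => rfl
  rw [Finset.sum_congr rfl h1, Finset.sum_add_distrib, Finset.sum_const, Finset.card_range]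
  have h0 : cfun s r (m + 1) 0 = s * ∑ j ∈ Finset.range (r + 1), cfun s r m j := rfl
  have h2 : ∑ j ∈ Finset.range r, cfun s r m j
      = ∑ j ∈ Finset.range (r + 1), cfun s r m j - cfun s r m r := by
    rw [Finset.sum_range_succ]; ring
  rw [h0, h2, nsmul_eq_mul]
  ring

lemma S_closed (s r : ℕ) : ∀ m, m ≤ r + 1 →
    ∑ j ∈ Finset.range (r + 1), cfun s r m j =
      ((s : ℚ) + 1) ^ m * ((r : ℚ) + 1) +
        ((r : ℚ) * s - 1) * m * ((s : ℚ) + 1) ^ (m - 1) := by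
  intro m
  induction m with
  | zero => intro _; simp [cfun_zero]
  | succ m ih =>
    intro hm
    rw [S_rec, ih (by omega), cfun_const s r m r (by omega) le_rfl]
    have : ((s : ℚ) + 1) * (((r : ℚ) * s - 1) * m * ((s : ℚ) + 1) ^ (m - 1))
        = ((r : ℚ) * s - 1) * m * ((s : ℚ) + 1) ^ m := by
      cases m with
      | zero => simp
      | succ m =>
        rw [Nat.succ_sub_one, pow_succ]
        ring
    push_cast [Nat.succ_sub_one]
    rw [mul_add, this]
    push_cast
    ring

lemma cfun_diag (s r : ℕ) : ∀ j, j ≤ r →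
    cfun s r (j + 1) j = (s : ℚ) * ((r : ℚ) + 1) +
      (s : ℚ) * ∑ i ∈ Finset.range j, ((s : ℚ) + 1) ^ (i + 1) := by
  intro j
  induction j with
  | zero =>
    intro _
    show (s : ℚ) * ∑ j ∈ Finset.range (r + 1), cfun s r 0 j = _
    simp [cfun_zero]
  | succ j ih =>
    intro hj
    show cfun s r (j + 1) j + s * cfun s r (j + 1) r = _
    rw [ih (by omega), cfun_const s r (j + 1) r (by omega) le_rfl, Finset.sum_range_succ]
    ring

lemma geom_aux (s r : ℕ) (hs : 0 < s) :
    (s : ℚ) * ∑ i ∈ Finset.range r, ((s : ℚ) + 1) ^ (i + 1) =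
      ((s : ℚ) + 1) ^ (r + 1) - ((s : ℚ) + 1) := by
  have hg := geom_sum_mul ((s : ℚ) + 1) r
  have hsq : ((s : ℚ) + 1) - 1 = (s : ℚ) := by ring
  rw [hsq] at hg
  calc (s : ℚ) * ∑ i ∈ Finset.range r, ((s : ℚ) + 1) ^ (i + 1)
      = (∑ i ∈ Finset.range r, ((s : ℚ) + 1) ^ i) * s * ((s : ℚ) + 1) := by
        rw [Finset.sum_mul, Finset.sum_mul, Finset.mul_sum]
        exact Finset.sum_congr rfl fun i _ => by ring
    _ = (((s : ℚ) + 1) ^ r - 1) * ((s : ℚ) + 1) := by rw [hg]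
    _ = ((s : ℚ) + 1) ^ (r + 1) - ((s : ℚ) + 1) := by rw [pow_succ]; ring

/-- for `k = s(r+1)`, the sum of all entries of `A_{k,s}^{r+2}` equals
`(s+1)^{r+1}·((r+3)·s·(sr−1) + s(r+1) + s(s+1)) + s(rs−1)²`. -/
theorem sum_entries_transferMatrix_pow_succ (s r : ℕ) (hs : 0 < s) (hr : 0 < r) :
    ∑ a : Fin (s * (r + 1)), ∑ b : Fin (s * (r + 1)),
        (transferMatrix (s * (r + 1)) s ^ (r + 2)) a b =
      ((s : ℚ) + 1) ^ (r + 1) *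
        (((r : ℚ) + 3) * s * ((s : ℚ) * r - 1) + (s : ℚ) * ((r : ℚ) + 1)
          + s * ((s : ℚ) + 1))
        + (s : ℚ) * ((r : ℚ) * s - 1) ^ 2 := by
  have key := mulVec_pow s r hs hr (r + 2)
  have h1 : ∀ a : Fin (s * (r + 1)),
      ∑ b : Fin (s * (r + 1)), (transferMatrix (s * (r + 1)) s ^ (r + 2)) a b
        = cfun s r (r + 2) ((a : ℕ) / s) := by
    intro a
    have := congrFun key a
    simpa [Matrix.mulVec, dotProduct] using this
  rw [Finset.sum_congr rfl (fun a _ => h1 a)]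
  rw [Fin.sum_univ_eq_sum_range (fun n => cfun s r (r + 2) (n / s)),
    sum_div_blocks _ s hs]
  rw [S_rec s r (r + 1), S_closed s r (r + 1) le_rfl,
    cfun_diag s r r le_rfl, Nat.add_sub_cancel]
  rw [mul_add, geom_aux s r hs]
  push_cast
  rw [pow_succ ((s : ℚ) + 1) r]
  ring
end
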